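/- arXiv:1308.3355 — 3 statements merged into one kernel-verified Lean document; each statement's English description precedes it below -/
import Mathlib

section
/- Let m and k be odd positive integers with k < m and gcd(k, m) = 1. Let e = 2^{m-1} - 2^{k-1} - 1, let L(x) = Σ_{i=0}^{k-1} x^{2^i}, and define f : F_{2^m} → F_{2^m} by f(x) = x^e · L(x). Let d be a positive integer with d·(2^k - 1) ≡ 1 (mod 2^{2m} - 1). Then f is a bijection of F_{2^m}, and its inverse is the map x ↦ (D_d(x^2))^{-1}; that is, for every x ∈ F_{2^m} one has f((D_d(x^2))^{-1}) = x and (D_d(f(x)^2))^{-1} = x. -/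
instance : Fact (Nat.Prime 2) := ⟨Nat.prime_two⟩

/-- The Dickson polynomial of the first kind with parameter 1, evaluated at `x`:
`D_d(x) = Σ_{i=0}^{⌊d/2⌋} (d/(d-i))·binom(d-i, i)·x^(d-2i)`, with the integer
coefficients cast into the field (hence reduced modulo 2). -/
noncomputable def dicksonEval {m : ℕ} (d : ℕ) (x : GaloisField 2 m) : GaloisField 2 m :=
  ∑ i ∈ Finset.range (d / 2 + 1),
    ((d * Nat.choose (d - i) i / (d - i) : ℕ) : GaloisField 2 m) * x ^ (d - 2 * i)

/-! Over the algebraic closure write `x = γ² + γ` and put `u = γ / (γ + 1)`. In characteristic 2,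
`u + u⁻¹ = x⁻¹`, `L(x) = γ^(2^k) + γ`, and a direct computation gives `f(x)² = w + w⁻¹` for
`w = u^(2^k - 1)`. Since `γ`, hence `u`, lies in `𝔽_{2^(2m)}`, the congruence on `d` gives
`w^d = u`, so `D_d(f(x)²) = w^d + w^(-d) = u + u⁻¹ = x⁻¹`. Hence `x ↦ (D_d(x²))⁻¹` is a left
inverse of `f`, and `f` is bijective because the field is finite. -/

open Finset Polynomial

def dicksonCoeff (n i : ℕ) : ℕ := n * (n - i).choose i / (n - i)

-- `dicksonEval d x` unfolds to `dicksonSum d x`; the latter makes sense over any commutative ring.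
noncomputable def dicksonSum {R : Type*} [CommRing R] (n : ℕ) (x : R) : R :=
  ∑ i ∈ range (n / 2 + 1), (dicksonCoeff n i : R) * x ^ (n - 2 * i)

namespace dicksonCoeff

theorem eq_zero_of_lt {n i : ℕ} (h : n < 2 * i) : dicksonCoeff n i = 0 := by
  simp [dicksonCoeff, Nat.choose_eq_zero_of_lt (show n - i < i by omega)]

theorem zero_right {n : ℕ} (hn : n ≠ 0) : dicksonCoeff n 0 = 1 := by
  simp [dicksonCoeff, Nat.pos_of_ne_zero hn]

-- The division in `dicksonCoeff` is exact.
theorem mul_eq_mul_choose {a : ℕ} (ha : a ≠ 0) (i : ℕ) :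
    dicksonCoeff (a + i) i * a = (a + i) * a.choose i := by
  have hdvd : a ∣ (a + i) * a.choose i := by
    obtain ⟨b, rfl⟩ := Nat.exists_eq_succ_of_ne_zero ha
    rcases i with _ | j
    · simp
    · rw [add_mul, mul_comm (j + 1), ← Nat.add_one_mul_choose_eq]
      exact dvd_add (dvd_mul_right _ _) (dvd_mul_right _ _)
  rw [dicksonCoeff, Nat.add_sub_cancel, Nat.div_mul_cancel hdvd]

theorem add_two {n : ℕ} (hn : n ≠ 0) (i : ℕ) :
    dicksonCoeff (n + 2) (i + 1) = dicksonCoeff (n + 1) (i + 1) + dicksonCoeff n i := by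
  rcases lt_or_ge n (2 * i) with h | h
  · rw [eq_zero_of_lt h, eq_zero_of_lt (by omega : n + 1 < 2 * (i + 1)),
      eq_zero_of_lt (by omega : n + 2 < 2 * (i + 1))]
  obtain ⟨a, rfl⟩ : ∃ a, n = a + i := ⟨n - i, by omega⟩
  have ha : a ≠ 0 := by omega
  have hP := mul_eq_mul_choose (a := a + 1) (by omega) (i + 1)
  have hQ := mul_eq_mul_choose ha (i + 1)
  have hR := mul_eq_mul_choose ha i
  have hC := Nat.choose_succ_succ' a i
  have hS := Nat.choose_succ_right_eq a i
  rw [show a + 1 + (i + 1) = a + i + 2 by ring] at hP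
  rw [show a + (i + 1) = a + i + 1 by ring] at hQ
  -- After clearing the denominators `a` and `a + 1` this is Pascal's rule combined with
  -- `C(a, i + 1) (i + 1) = C(a, i) (a - i)`.
  apply Nat.eq_of_mul_eq_mul_right (show 0 < a * (a + 1) by positivity)
  zify [(by omega : i ≤ a)] at hP hQ hR hC hS ⊢
  linear_combination a * hP - (a + 1) * hQ - (a + 1) * hR + a * (a + i + 2) * hC - hS

end dicksonCoeff

namespace dicksonSum

variable {R : Type*} [CommRing R]

theorem eq_sum_range {n M : ℕ} (hM : n / 2 + 1 ≤ M) (x : R) :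
    dicksonSum n x = ∑ i ∈ range M, (dicksonCoeff n i : R) * x ^ (n - 2 * i) := by
  refine sum_subset (range_subset_range.2 hM) fun i _ hi => ?_
  rw [mem_range, not_lt] at hi
  rw [dicksonCoeff.eq_zero_of_lt (by omega), Nat.cast_zero, zero_mul]

theorem add_two {n : ℕ} (hn : n ≠ 0) (x : R) :
    dicksonSum (n + 2) x = x * dicksonSum (n + 1) x + dicksonSum n x := by
  have hterm : ∀ i, (dicksonCoeff (n + 2) (i + 1) : R) * x ^ (n + 2 - 2 * (i + 1)) =
      x * ((dicksonCoeff (n + 1) (i + 1) : R) * x ^ (n + 1 - 2 * (i + 1))) +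
        (dicksonCoeff n i : R) * x ^ (n - 2 * i) := by
    intro i
    rw [dicksonCoeff.add_two hn, Nat.cast_add, add_mul,
      show n + 2 - 2 * (i + 1) = n - 2 * i by omega]
    rcases lt_or_ge n (2 * i + 1) with h | h
    · rw [dicksonCoeff.eq_zero_of_lt (by omega : n + 1 < 2 * (i + 1))]
      simp
    · rw [mul_left_comm, ← pow_succ', show n + 1 - 2 * (i + 1) + 1 = n - 2 * i by omega]
  have hlead : ∀ p, p ≠ 0 → p ≤ n + 2 → dicksonSum p x =
      x ^ p + ∑ i ∈ range (n / 2 + 1), (dicksonCoeff p (i + 1) : R) * x ^ (p - 2 * (i + 1)) := by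
    intro p hp0 hp
    rw [eq_sum_range (M := n / 2 + 2) (by omega), sum_range_succ', dicksonCoeff.zero_right hp0,
      Nat.cast_one, one_mul, mul_zero, Nat.sub_zero, add_comm]
  rw [hlead (n + 1) (by omega) (by omega), hlead (n + 2) (by omega) le_rfl, dicksonSum]
  simp only [hterm, sum_add_distrib]
  rw [mul_add, mul_sum, pow_succ' x (n + 1)]
  ring

-- Without the signs `(-1)^i` the sum follows the recursion of `dickson 1 (-1)`. It differs at
-- `n = 0`, where `dicksonCoeff 0 0 = 0 / 0 = 0` but `dickson 1 (-1) 0 = 2`.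
theorem eq_eval_dickson : ∀ {n : ℕ}, n ≠ 0 → ∀ x : R, dicksonSum n x = (dickson 1 (-1) n).eval x
  | 1, _, x => by simp [dicksonSum, dicksonCoeff]
  | 2, _, x => by norm_num [dicksonSum, dicksonCoeff, sum_range_succ, sq]
  | n + 3, _, x => by
    rw [add_two (by omega), dickson_add_two, eq_eval_dickson (n := n + 2) (by omega),
      eq_eval_dickson (n := n + 1) (by omega)]
    simp

variable [CharP R 2]

theorem eq_eval_dickson_one_one (n : ℕ) (x : R) : dicksonSum n x = (dickson 1 1 n).eval x := by
  rcases eq_or_ne n 0 with rfl | hn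
  · norm_num [dicksonSum, dicksonCoeff, dickson_zero]
    exact CharTwo.two_eq_zero.symm
  · rw [eq_eval_dickson hn, CharTwo.neg_eq]

theorem add_of_mul_eq_one {x y : R} (h : x * y = 1) (n : ℕ) :
    dicksonSum n (x + y) = x ^ n + y ^ n := by
  rw [eq_eval_dickson_one_one, dickson_one_one_eval_add_inv x y h]

theorem zero_right (n : ℕ) : dicksonSum n (0 : R) = 0 := by
  rw [← CharTwo.add_self_eq_zero (1 : R), add_of_mul_eq_one (mul_one 1), one_pow,
    CharTwo.add_self_eq_zero]

end dicksonSum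

theorem map_dicksonSum {R S : Type*} [CommRing R] [CommRing S] (φ : R →+* S) (n : ℕ) (x : R) :
    φ (dicksonSum n x) = dicksonSum n (φ x) := by
  simp [dicksonSum, map_sum]

theorem sum_range_sq_add_self_pow_two_pow {R : Type*} [CommRing R] [CharP R 2] (γ : R) (n : ℕ) :
    ∑ i ∈ range n, (γ ^ 2 + γ) ^ 2 ^ i = γ ^ 2 ^ n + γ := by
  induction n with
  | zero => simp [CharTwo.add_self_eq_zero]
  | succ n ih =>
    rw [sum_range_succ, ih, add_pow_char_pow, ← pow_mul, ← pow_succ']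
    linear_combination γ ^ 2 ^ n * CharTwo.two_eq_zero (R := R)

theorem IsAlgClosed.exists_sq_add_self_eq {K : Type*} [Field K] [IsAlgClosed K] (a : K) :
    ∃ γ : K, γ ^ 2 + γ = a := by
  have hdeg : (X ^ 2 + X - C a : K[X]).degree = 2 := by compute_degree!
  obtain ⟨γ, hγ⟩ := IsAlgClosed.exists_root (X ^ 2 + X - C a) (by rw [hdeg]; decide)
  exact ⟨γ, by simpa [sub_eq_zero] using hγ⟩

theorem two_mul_pow_sub_pow_sub_one_add {m k : ℕ} (hk : 0 < k) (hkm : k < m) :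
    2 * (2 ^ (m - 1) - 2 ^ (k - 1) - 1) + (2 ^ k + 1) = 2 ^ m - 1 := by
  have hm : 2 ^ m = 2 * 2 ^ (m - 1) := by rw [← pow_succ']; congr 1; omega
  have hk : 2 ^ k = 2 * 2 ^ (k - 1) := by rw [← pow_succ']; congr 1; omega
  have hlt : 2 ^ (k - 1) < 2 ^ (m - 1) := Nat.pow_lt_pow_right (by norm_num) (by omega)
  omega

theorem pow_sub_one_eq_one_of_pow_eq_self {K : Type*} [Field K] {x : K} (hx : x ≠ 0) {n : ℕ}
    (hn : n ≠ 0) (h : x ^ n = x) : x ^ (n - 1) = 1 := by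
  refine mul_right_cancel₀ hx ?_
  rw [← pow_succ, Nat.sub_add_cancel (Nat.pos_of_ne_zero hn), h, one_mul]

section CharTwoField

variable {K : Type*} [Field K] [CharP K 2]

theorem inv_sq_add_self_eq_div_add_inv {γ : K} (h0 : γ ≠ 0) (h1 : γ + 1 ≠ 0) :
    (γ ^ 2 + γ)⁻¹ = γ / (γ + 1) + (γ / (γ + 1))⁻¹ := by
  rw [inv_div]
  field_simp
  linear_combination -(γ ^ 2 + γ) * CharTwo.two_eq_zero (R := K)

theorem div_add_one_pow_add_inv_mul (k : ℕ) {γ : K} (h0 : γ ≠ 0) (h1 : γ + 1 ≠ 0) :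
    ((γ / (γ + 1)) ^ (2 ^ k - 1) + ((γ / (γ + 1)) ^ (2 ^ k - 1))⁻¹) * (γ ^ 2 + γ) ^ (2 ^ k + 1) =
      (γ ^ 2 ^ k + γ) ^ 2 := by
  obtain ⟨c, hc⟩ : ∃ c, 2 ^ k = c + 1 := ⟨2 ^ k - 1, (Nat.sub_add_cancel Nat.one_le_two_pow).symm⟩
  have hfrob : (γ + 1) ^ (c + 1) = γ ^ (c + 1) + 1 := by rw [← hc, add_pow_char_pow, one_pow]
  rw [hc, Nat.add_sub_cancel, div_pow, inv_div, show γ ^ 2 + γ = γ * (γ + 1) by ring, mul_pow]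
  field_simp
  linear_combination γ ^ c * (γ + 1) ^ c * γ ^ 2 * ((γ + 1) ^ (c + 1) + γ ^ (c + 1) + 1) * hfrob +
    γ ^ c * (γ + 1) ^ c * (γ ^ (c + 1) * γ * (γ ^ (c + 1) * γ + γ ^ (c + 1) + γ - 1)) *
      CharTwo.two_eq_zero (R := K)

theorem pow_two_pow_two_mul_eq_self {γ : K} {m : ℕ} (h : (γ ^ 2 + γ) ^ 2 ^ m = γ ^ 2 + γ) :
    γ ^ 2 ^ (2 * m) = γ := by
  -- `δ` is a root of `Y² + Y`, so it lies in `𝔽₂`.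
  set δ := γ ^ 2 ^ m + γ with hδ_def
  have hδ : δ * (δ + 1) = 0 := by
    rw [add_pow_char_pow, ← pow_mul, mul_comm, pow_mul] at h
    linear_combination h + (γ ^ 2 ^ m * γ + γ ^ 2 + γ) * CharTwo.two_eq_zero (R := K)
  have hδm : δ ^ 2 ^ m = δ := by
    rcases mul_eq_zero.1 hδ with h0 | h1
    · rw [h0, zero_pow (by positivity)]
    · rw [eq_neg_of_add_eq_zero_left h1, CharTwo.neg_eq, one_pow]
  calc γ ^ 2 ^ (2 * m) = (γ + δ) ^ 2 ^ m := by
        rw [two_mul, pow_add, pow_mul]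
        congr 1
        linear_combination -hδ_def - γ * CharTwo.two_eq_zero (R := K)
    _ = γ := by
        rw [add_pow_char_pow, hδm]
        linear_combination hδ_def + γ ^ 2 ^ m * CharTwo.two_eq_zero (R := K)

theorem dicksonSum_sq_eq_inv {m k d : ℕ} (hk : 0 < k) (hkm : k < m)
    (hd : d * (2 ^ k - 1) ≡ 1 [MOD 2 ^ (2 * m) - 1]) {γ : K} (hX : γ ^ 2 + γ ≠ 0)
    (hXm : (γ ^ 2 + γ) ^ 2 ^ m = γ ^ 2 + γ) :
    dicksonSum d
        (((γ ^ 2 + γ) ^ (2 ^ (m - 1) - 2 ^ (k - 1) - 1) * ∑ i ∈ range k, (γ ^ 2 + γ) ^ 2 ^ i) ^ 2) =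
      (γ ^ 2 + γ)⁻¹ := by
  have h0 : γ ≠ 0 := by rintro rfl; simp at hX
  have h1 : γ + 1 ≠ 0 := fun h => hX (by linear_combination γ * h)
  set u := γ / (γ + 1)
  have hu : u ≠ 0 := div_ne_zero h0 h1
  have hw : u ^ (2 ^ k - 1) ≠ 0 := pow_ne_zero _ hu
  have hval :
      ((γ ^ 2 + γ) ^ (2 ^ (m - 1) - 2 ^ (k - 1) - 1) * ∑ i ∈ range k, (γ ^ 2 + γ) ^ 2 ^ i) ^ 2 =
        u ^ (2 ^ k - 1) + (u ^ (2 ^ k - 1))⁻¹ := by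
    refine mul_right_cancel₀ (pow_ne_zero (2 ^ k + 1) hX) ?_
    rw [div_add_one_pow_add_inv_mul k h0 h1, sum_range_sq_add_self_pow_two_pow, mul_pow, ← pow_mul,
      mul_right_comm, ← pow_add, mul_comm _ 2, two_mul_pow_sub_pow_sub_one_add hk hkm,
      pow_sub_one_eq_one_of_pow_eq_self hX (by positivity) hXm, one_mul]
  have hu_order : u ^ (2 ^ (2 * m) - 1) = 1 := by
    refine pow_sub_one_eq_one_of_pow_eq_self hu (by positivity) ?_
    rw [div_pow, add_pow_char_pow, one_pow, pow_two_pow_two_mul_eq_self hXm]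
  have hwd : (u ^ (2 ^ k - 1)) ^ d = u := by
    rw [← pow_mul, mul_comm, pow_eq_pow_of_modEq hd hu_order, pow_one]
  rw [hval, dicksonSum.add_of_mul_eq_one (mul_inv_cancel₀ hw), inv_pow, hwd,
    inv_sq_add_self_eq_div_add_inv h0 h1]

end CharTwoField

theorem dicksonEval_sq_pow_mul_sum_eq_inv {m k d : ℕ} (hk : 0 < k) (hkm : k < m)
    (hd : d * (2 ^ k - 1) ≡ 1 [MOD 2 ^ (2 * m) - 1]) (x : GaloisField 2 m) :
    dicksonEval d ((x ^ (2 ^ (m - 1) - 2 ^ (k - 1) - 1) * ∑ i ∈ range k, x ^ 2 ^ i) ^ 2) = x⁻¹ := by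
  change dicksonSum d _ = x⁻¹
  rcases eq_or_ne x 0 with rfl | hx
  · simp [dicksonSum.zero_right]
  let φ := algebraMap (GaloisField 2 m) (AlgebraicClosure (GaloisField 2 m))
  obtain ⟨γ, hγ⟩ := IsAlgClosed.exists_sq_add_self_eq (φ x)
  have hXm : (γ ^ 2 + γ) ^ 2 ^ m = γ ^ 2 + γ := by
    have := Fintype.ofFinite (GaloisField 2 m)
    rw [hγ, ← map_pow, ← GaloisField.card 2 m (by omega), Nat.card_eq_fintype_card,
      FiniteField.pow_card]
  apply φ.injective
  rw [map_dicksonSum]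
  simp only [map_pow, map_mul, map_sum, map_inv₀, ← hγ]
  exact dicksonSum_sq_eq_inv hk hkm hd (hγ ▸ (map_ne_zero φ).2 hx) hXm

theorem stmt0_general (m k : ℕ) (hkpos : 0 < k) (hkm : k < m)
    (d : ℕ) (hd : d * (2 ^ k - 1) ≡ 1 [MOD 2 ^ (2 * m) - 1])
    (f : GaloisField 2 m → GaloisField 2 m)
    (hf : ∀ x, f x = x ^ (2 ^ (m - 1) - 2 ^ (k - 1) - 1) * ∑ i ∈ Finset.range k, x ^ (2 ^ i)) :
    Function.Bijective f ∧
      (∀ x, f ((dicksonEval d (x ^ 2))⁻¹) = x) ∧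
      (∀ x, (dicksonEval d ((f x) ^ 2))⁻¹ = x) := by
  have hDf : ∀ x, dicksonEval d (f x ^ 2) = x⁻¹ := fun x => by
    rw [hf]
    exact dicksonEval_sq_pow_mul_sum_eq_inv hkpos hkm hd x
  have hleft : Function.LeftInverse (fun y => (dicksonEval d (y ^ 2))⁻¹) f := fun x => by
    simp only [hDf, inv_inv]
  have hbij : Function.Bijective f := Finite.injective_iff_bijective.1 hleft.injective
  refine ⟨hbij, fun x => ?_, hleft⟩
  obtain ⟨y, rfl⟩ := hbij.surjective x
  rw [hDf, inv_inv]

theorem stmt0 (m k : ℕ) (hmpos : 0 < m) (hkpos : 0 < k) (hm : Odd m) (hk : Odd k)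
    (hkm : k < m) (hgcd : Nat.gcd k m = 1)
    (d : ℕ) (hdpos : 0 < d) (hd : d * (2 ^ k - 1) ≡ 1 [MOD 2 ^ (2 * m) - 1])
    (f : GaloisField 2 m → GaloisField 2 m)
    (hf : ∀ x, f x = x ^ (2 ^ (m - 1) - 2 ^ (k - 1) - 1) * ∑ i ∈ Finset.range k, x ^ (2 ^ i)) :
    Function.Bijective f ∧
      (∀ x, f ((dicksonEval d (x ^ 2))⁻¹) = x) ∧
      (∀ x, (dicksonEval d ((f x) ^ 2))⁻¹ = x) :=
  stmt0_general m k hkpos hkm d hd f hf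
end

section
/- Let m and k be odd positive integers with k < m and gcd(k, m) = 1, let d be a positive integer with d·(2^k - 1) ≡ 1 (mod 2^{2m} - 1), and let g : F_{2^m} → F_2 be balanced with g(0) = 0. Define f : F_{2^m} × F_{2^m} → F_2 by f(x, y) = g((x · D_d(y^2 · (x^{2^k+1})^{-1}))^{-1}) (by the convention 0^{-1} = 0, for x = 0 the argument of g is 0, so f(0, y) = 0). Then f is bent. -/
noncomputable instance (m : ℕ) : Fintype (GaloisField 2 m) := Fintype.ofFinite _

/-- The absolute trace `tr(x) = Σ_{i=0}^{m-1} x^(2^i)`, as an element of the field. -/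
noncomputable def trF {m : ℕ} (x : GaloisField 2 m) : GaloisField 2 m :=
  ∑ i ∈ Finset.range m, x ^ (2 ^ i)

/-- The absolute trace regarded as taking values in `F₂ = ZMod 2`
(its value in the field is always `0` or `1`). -/
noncomputable def tr2 {m : ℕ} (x : GaloisField 2 m) : ZMod 2 :=
  open scoped Classical in
  if trF x = 1 then 1 else 0

/-!
Write `q = 2^m` and `χ(a) = (-1)^tr(a)`. For `x ≠ 0` the map `y ↦ x · D_d(y² / x^(2^k+1))` is a
bijection of `F_q` whose inverse `c ↦ L_c(x) = √(x^(2^k+1) · D_{2^k-1}(c / x))` is additive in `x`: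
in characteristic 2 the Dickson polynomial `D_{2^k-1}` is `∑_{i<k} X^(2^k+1-2^(i+1))`, and
`D_d ∘ D_{2^k-1} = D_{2^k-1} ∘ D_d = D_{d(2^k-1)}` is the identity of `F_q` (write `s = z + z⁻¹`
with `z ∈ F_{q²}`, so that `D_n(s) = zⁿ + z⁻ⁿ`).
Hence `f` equals `g(c⁻¹)` on each subspace `{(x, L_c x)}` minus the origin and vanishes on
`{0} × F_q`, so the Walsh transform at `(u, v)` is `∑_y χ(v y) + ∑_c (-1)^g(c⁻¹) τ_c`, where each
`τ_c = ∑_x χ(u x + v L_c x)` is `0` or `q`. For `v ≠ 0` the `τ_c` add up to `q`, so exactly one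
survives; for `v = 0` they are all equal and the second sum vanishes because `g` is balanced.
-/

open Finset Polynomial

lemma dicksonCoeff_zero {n : ℕ} (hn : n ≠ 0) : dicksonCoeff n 0 = 1 := by
  simp [dicksonCoeff, Nat.div_self (Nat.pos_of_ne_zero hn)]

lemma dicksonCoeff_eq_zero {n i : ℕ} (h : n < 2 * i) : dicksonCoeff n i = 0 := by
  rw [dicksonCoeff, Nat.choose_eq_zero_of_lt (by omega), mul_zero, Nat.zero_div]

lemma dicksonCoeff_eq_choose_add_choose (a b : ℕ) :
    dicksonCoeff (a + b + 2) (b + 1) = (a + 1).choose (b + 1) + a.choose b := by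
  have hsub : a + b + 2 - (b + 1) = a + 1 := by omega
  have pascal := Nat.add_one_mul_choose_eq a b
  rw [dicksonCoeff, hsub, Nat.div_eq_of_eq_mul_left (by omega)]
  linear_combination pascal.symm

lemma dicksonCoeff_add_two {n j : ℕ} (hn : n ≠ 0) (hj : 2 * j ≤ n) :
    dicksonCoeff (n + 2) (j + 1) = dicksonCoeff (n + 1) (j + 1) + dicksonCoeff n j := by
  rcases j with _ | b
  · obtain ⟨a, rfl⟩ : ∃ a, n = a + 1 := ⟨n - 1, by omega⟩
    have h1 := dicksonCoeff_eq_choose_add_choose (a + 1) 0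
    have h2 := dicksonCoeff_eq_choose_add_choose a 0
    simp only [zero_add, Nat.choose_one_right, Nat.choose_zero_right] at h1 h2
    rw [dicksonCoeff_zero (by omega), add_right_comm _ 1, h1, h2]
  · obtain ⟨a, rfl⟩ : ∃ a, n = a + 2 * b + 2 := ⟨n - 2 * b - 2, by omega⟩
    have h1 := dicksonCoeff_eq_choose_add_choose (a + b + 1) (b + 1)
    have h2 := dicksonCoeff_eq_choose_add_choose (a + b) (b + 1)
    have h3 := dicksonCoeff_eq_choose_add_choose (a + b) b
    have p1 := Nat.choose_succ_succ' (a + b + 1) (b + 1)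
    have p2 := Nat.choose_succ_succ' (a + b) b
    ring_nf at h1 h2 h3 p1 p2 ⊢
    omega

lemma dicksonCoeff_add_two_cast {R : Type*} [CommRing R] [CharP R 2] {n j : ℕ}
    (hj : 2 * j ≤ n) :
    (dicksonCoeff (n + 2) (j + 1) : R) = dicksonCoeff (n + 1) (j + 1) + dicksonCoeff n j := by
  rcases eq_or_ne n 0 with rfl | hn
  · obtain rfl : j = 0 := by omega
    simp [show dicksonCoeff 2 1 = 2 by decide, show dicksonCoeff 1 1 = 0 by decide,
      show dicksonCoeff 0 0 = 0 by decide, CharTwo.two_eq_zero]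
  · rw [dicksonCoeff_add_two hn hj, Nat.cast_add]

lemma sum_range_dicksonCoeff {R : Type*} [CommRing R] {n N : ℕ} (hN : n / 2 + 1 ≤ N)
    (f : ℕ → R) :
    ∑ i ∈ range (n / 2 + 1), (dicksonCoeff n i : R) * f i
      = ∑ i ∈ range N, (dicksonCoeff n i : R) * f i := by
  refine sum_subset (range_subset_range.mpr hN) fun i _ hi => ?_
  rw [dicksonCoeff_eq_zero (by simp at hi; omega), Nat.cast_zero, zero_mul]

-- In characteristic 2 the signs `(-1) ^ i` of the classical explicit formula disappear.
theorem dickson_one_one_eval_eq_sum {R : Type*} [CommRing R] [CharP R 2] :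
    ∀ (n : ℕ) (x : R), (dickson 1 (1 : R) n).eval x
      = ∑ i ∈ range (n / 2 + 1), (dicksonCoeff n i : R) * x ^ (n - 2 * i)
  | 0, x => by
    simp [show dicksonCoeff 0 0 = 0 by decide]
    norm_num
    exact CharTwo.two_eq_zero
  | 1, x => by simp [show dicksonCoeff 1 0 = 1 by decide]
  | n + 2, x => by
    have hx : x * ∑ i ∈ range (n / 2 + 2), (dicksonCoeff (n + 1) i : R) * x ^ (n + 1 - 2 * i)
        = ∑ i ∈ range (n / 2 + 2), (dicksonCoeff (n + 1) i : R) * x ^ (n + 2 - 2 * i) := by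
      rw [mul_sum]
      refine sum_congr rfl fun i _ => ?_
      rcases le_or_gt (2 * i) (n + 1) with hi | hi
      · rw [show n + 2 - 2 * i = n + 1 - 2 * i + 1 by omega, pow_succ]
        ring
      · simp [dicksonCoeff_eq_zero hi]
    rw [dickson_add_two, C_1, one_mul, eval_sub, eval_mul, eval_X, CharTwo.sub_eq_add,
      dickson_one_one_eval_eq_sum (n + 1), dickson_one_one_eval_eq_sum n,
      sum_range_dicksonCoeff (N := n / 2 + 2) (by omega), hx,
      show (n + 2) / 2 + 1 = n / 2 + 2 by omega,
      sum_range_succ' (fun i => (dicksonCoeff (n + 1) i : R) * x ^ (n + 2 - 2 * i)),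
      sum_range_succ' (fun i => (dicksonCoeff (n + 2) i : R) * x ^ (n + 2 - 2 * i)),
      dicksonCoeff_zero (by omega), dicksonCoeff_zero (by omega), add_right_comm,
      ← sum_add_distrib]
    refine congrArg (· + _) (sum_congr rfl fun j hj => ?_)
    rw [dicksonCoeff_add_two_cast (by simp at hj; omega),
      show n + 2 - 2 * (j + 1) = n - 2 * j by omega]
    ring

lemma algebraMap_dickson_one_one_eval {K L : Type*} [CommRing K] [CommRing L] [Algebra K L]
    (n : ℕ) (s : K) :
    algebraMap K L ((dickson 1 (1 : K) n).eval s)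
      = (dickson 1 (1 : L) n).eval (algebraMap K L s) := by
  rw [← eval₂_at_apply, ← eval_map, map_dickson, map_one]

lemma IsAlgClosed.exists_add_inv_eq {L : Type*} [Field L] [IsAlgClosed L] (s : L) :
    ∃ z : L, z ≠ 0 ∧ z + z⁻¹ = s := by
  obtain ⟨z, hz⟩ := IsAlgClosed.exists_root (X ^ 2 - C s * X + 1) (by
    rw [show (X ^ 2 - C s * X + 1 : L[X]) = C 1 * X ^ 2 + C (-s) * X + C 1 by simp; ring,
      degree_quadratic one_ne_zero]; decide)
  have hz : z ^ 2 - s * z + 1 = 0 := by simpa using hz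
  have hz0 : z ≠ 0 := by rintro rfl; simp at hz
  refine ⟨z, hz0, ?_⟩
  field_simp
  linear_combination hz

lemma eq_or_eq_inv_of_add_inv_eq {K : Type*} [Field K] {w z : K} (hw : w ≠ 0) (hz : z ≠ 0)
    (h : w + w⁻¹ = z + z⁻¹) : w = z ∨ w = z⁻¹ := by
  have : (w - z) * (w * z - 1) = 0 := by
    field_simp at h
    linear_combination h
  rcases mul_eq_zero.mp this with h | h
  · exact .inl (sub_eq_zero.mp h)
  · exact .inr (eq_inv_of_mul_eq_one_left (sub_eq_zero.mp h))

lemma FiniteField.pow_card_sq_of_add_inv_eq {K L : Type*} [Field K] [Fintype K] [Field L]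
    [Algebra K L] {z : L} (hz : z ≠ 0) {s : K} (h : z + z⁻¹ = algebraMap K L s) :
    z ^ (Fintype.card K ^ 2) = z := by
  have hfrob : z ^ Fintype.card K + (z ^ Fintype.card K)⁻¹ = z + z⁻¹ := by
    have := congrArg (FiniteField.frobeniusAlgHom K L) h
    rwa [map_add, map_inv₀, AlgHom.commutes, ← h, FiniteField.frobeniusAlgHom_apply] at this
  rw [sq, pow_mul]
  rcases eq_or_eq_inv_of_add_inv_eq (pow_ne_zero _ hz) hz hfrob with h' | h'
  · rw [h', h']
  · rw [h', inv_pow, h', inv_inv]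

theorem FiniteField.dickson_one_one_eval_of_modEq {K : Type*} [Field K] [Fintype K] {N : ℕ}
    (hN : N ≡ 1 [MOD Fintype.card K ^ 2 - 1]) (s : K) : (dickson 1 (1 : K) N).eval s = s := by
  obtain ⟨z, hz, hzs⟩ := IsAlgClosed.exists_add_inv_eq (algebraMap K (AlgebraicClosure K) s)
  have hq : 1 < Fintype.card K ^ 2 - 1 := by
    have : 2 ^ 2 ≤ Fintype.card K ^ 2 := Nat.pow_le_pow_left Fintype.one_lt_card 2
    omega
  have hpow : ∀ w : AlgebraicClosure K, w ^ (Fintype.card K ^ 2) = w → w ≠ 0 → w ^ N = w := by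
    intro w hw hw0
    have hunit : w ^ (Fintype.card K ^ 2 - 1) = 1 := by
      refine mul_right_cancel₀ hw0 ?_
      rw [← pow_succ, Nat.sub_add_cancel (by omega), hw, one_mul]
    rw [pow_eq_pow_mod N hunit, hN, Nat.one_mod_eq_one.mpr hq.ne', pow_one]
  have hzq := FiniteField.pow_card_sq_of_add_inv_eq hz hzs
  apply (algebraMap K (AlgebraicClosure K)).injective
  rw [algebraMap_dickson_one_one_eval, ← hzs,
    dickson_one_one_eval_add_inv _ _ (mul_inv_cancel₀ hz), hpow z hzq hz,
    hpow z⁻¹ (by rw [inv_pow, hzq]) (inv_ne_zero hz)]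

theorem FiniteField.dickson_one_one_eval_eval_of_modEq {K : Type*} [Field K] [Fintype K]
    {a b : ℕ} (hab : a * b ≡ 1 [MOD Fintype.card K ^ 2 - 1]) (s : K) :
    (dickson 1 (1 : K) a).eval ((dickson 1 (1 : K) b).eval s) = s := by
  rw [← eval_comp, ← dickson_one_one_mul, FiniteField.dickson_one_one_eval_of_modEq hab]

lemma sum_range_succ_pow_two_pow_add_one_sub {R : Type*} [CommSemiring R] (k : ℕ) (s : R) :
    ∑ i ∈ range (k + 1), s ^ (2 ^ (k + 1) + 1 - 2 ^ (i + 1))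
      = s ^ 2 ^ k * ∑ i ∈ range k, s ^ (2 ^ k + 1 - 2 ^ (i + 1)) + s := by
  rw [sum_range_succ, mul_sum, Nat.add_sub_cancel_left, pow_one]
  refine congrArg (· + s) (sum_congr rfl fun i hi => ?_)
  have : 2 ^ (i + 1) ≤ 2 ^ k := Nat.pow_le_pow_right two_pos (by simpa using hi)
  rw [← pow_add, pow_succ 2 k]
  congr 1
  omega

lemma sum_pow_add_inv_eq {K : Type*} [Field K] [CharP K 2] (k : ℕ) {z : K} (hz : z ≠ 0) :
    ∑ i ∈ range k, (z + z⁻¹) ^ (2 ^ k + 1 - 2 ^ (i + 1))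
      = z ^ (2 ^ k - 1) + z⁻¹ ^ (2 ^ k - 1) := by
  induction k with
  | zero => simp [CharTwo.add_self_eq_zero]
  | succ k ih =>
    have hk : 1 ≤ 2 ^ k := Nat.one_le_two_pow
    have hsplit : ∀ y : K, y ^ 2 ^ k = y ^ (2 ^ k - 1) * y ∧
        y ^ (2 ^ (k + 1) - 1) = y ^ (2 ^ k - 1) * y ^ (2 ^ k - 1) * y := fun y => by
      rw [← pow_succ, ← pow_add, ← pow_succ, pow_succ 2 k]
      constructor <;> congr 1 <;> omega
    rw [sum_range_succ_pow_two_pow_add_one_sub, ih, add_pow_char_pow, (hsplit z).1,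
      (hsplit z⁻¹).1, (hsplit z).2, (hsplit z⁻¹).2]
    have hprod : z ^ (2 ^ k - 1) * z⁻¹ ^ (2 ^ k - 1) = 1 := by
      rw [← mul_pow, mul_inv_cancel₀ hz, one_pow]
    linear_combination (z + z⁻¹) * hprod + (z + z⁻¹) * (CharTwo.two_eq_zero (R := K))

theorem dickson_one_one_eval_two_pow_sub_one {K : Type*} [Field K] [CharP K 2] (k : ℕ)
    (s : K) :
    (dickson 1 (1 : K) (2 ^ k - 1)).eval s = ∑ i ∈ range k, s ^ (2 ^ k + 1 - 2 ^ (i + 1)) := by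
  obtain ⟨z, hz, hzs⟩ := IsAlgClosed.exists_add_inv_eq (algebraMap K (AlgebraicClosure K) s)
  apply (algebraMap K (AlgebraicClosure K)).injective
  rw [algebraMap_dickson_one_one_eval, ← hzs,
    dickson_one_one_eval_add_inv _ _ (mul_inv_cancel₀ hz), map_sum]
  simp_rw [map_pow, ← hzs]
  exact (sum_pow_add_inv_eq k hz).symm

section Spread

variable {K : Type*} [Field K] [CharP K 2]

def linearizedDickson (k : ℕ) (c : K) : K →+ K where
  toFun x := ∑ i ∈ range k, c ^ (2 ^ k + 1 - 2 ^ (i + 1)) * x ^ 2 ^ (i + 1)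
  map_zero' := by simp
  map_add' x y := by simp only [add_pow_char_pow, mul_add, sum_add_distrib]

lemma linearizedDickson_apply {k : ℕ} (c : K) {x : K} (hx : x ≠ 0) :
    linearizedDickson k c x
      = x ^ (2 ^ k + 1) * (dickson 1 (1 : K) (2 ^ k - 1)).eval (c * x⁻¹) := by
  simp only [linearizedDickson, AddMonoidHom.coe_mk, ZeroHom.coe_mk]
  rw [dickson_one_one_eval_two_pow_sub_one, mul_sum]
  refine sum_congr rfl fun i hi => ?_
  obtain ⟨e, he⟩ : ∃ e, 2 ^ k + 1 = 2 ^ (i + 1) + e := Nat.exists_eq_add_of_le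
    (Nat.le_add_right_of_le (Nat.pow_le_pow_right two_pos (by simpa using hi)))
  rw [he, Nat.add_sub_cancel_left, pow_add, mul_pow, inv_pow]
  field_simp
  ring

variable [PerfectRing K 2]

noncomputable def spreadMap (k : ℕ) (c : K) : K →+ K :=
  (frobeniusEquiv K 2).symm.toAddMonoidHom.comp (linearizedDickson k c)

lemma spreadMap_apply_eq_iff {k : ℕ} {c x y : K} :
    spreadMap k c x = y ↔ linearizedDickson k c x = y ^ 2 := by
  change (frobeniusEquiv K 2).symm _ = y ↔ _
  rw [RingEquiv.symm_apply_eq, frobeniusEquiv_apply, frobenius_def, eq_comm]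

variable [Fintype K] {k d : ℕ}

lemma mul_dickson_spreadMap (hd : d * (2 ^ k - 1) ≡ 1 [MOD Fintype.card K ^ 2 - 1]) {x : K}
    (hx : x ≠ 0) (c : K) :
    x * (dickson 1 (1 : K) d).eval ((spreadMap k c x) ^ 2 * (x ^ (2 ^ k + 1))⁻¹) = c := by
  rw [(spreadMap_apply_eq_iff.mp rfl).symm, linearizedDickson_apply c hx, mul_comm (x ^ _),
    mul_assoc, mul_inv_cancel₀ (pow_ne_zero _ hx), mul_one,
    FiniteField.dickson_one_one_eval_eval_of_modEq hd]
  field_simp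

lemma spreadMap_mul_dickson (hd : d * (2 ^ k - 1) ≡ 1 [MOD Fintype.card K ^ 2 - 1]) {x : K}
    (hx : x ≠ 0) (y : K) :
    spreadMap k (x * (dickson 1 (1 : K) d).eval (y ^ 2 * (x ^ (2 ^ k + 1))⁻¹)) x = y := by
  rw [spreadMap_apply_eq_iff, linearizedDickson_apply _ hx, mul_comm x, mul_assoc,
    mul_inv_cancel₀ hx, mul_one, FiniteField.dickson_one_one_eval_eval_of_modEq
      (by rwa [mul_comm] : (2 ^ k - 1) * d ≡ 1 [MOD Fintype.card K ^ 2 - 1])]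
  field_simp

lemma bijective_spreadMap_apply (hd : d * (2 ^ k - 1) ≡ 1 [MOD Fintype.card K ^ 2 - 1]) {x : K}
    (hx : x ≠ 0) : Function.Bijective fun c => spreadMap k c x :=
  Function.bijective_iff_has_inverse.mpr
    ⟨fun y => x * (dickson 1 (1 : K) d).eval (y ^ 2 * (x ^ (2 ^ k + 1))⁻¹),
      mul_dickson_spreadMap hd hx, spreadMap_mul_dickson hd hx⟩

end Spread

lemma Finset.exists_eq_ite_of_sum_eq {ι : Type*} [Fintype ι] [DecidableEq ι] {τ : ι → ℤ}
    {N : ℤ} (hN : N ≠ 0) (hτ : ∀ c, τ c = 0 ∨ τ c = N) (hsum : ∑ c, τ c = N) :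
    ∃ c₀, ∀ c, τ c = if c = c₀ then N else 0 := by
  have hS : ∑ c, τ c = #(univ.filter fun c => τ c = N) * N := by
    rw [← sum_filter_add_sum_filter_not univ fun c => τ c = N,
      sum_congr rfl fun c hc => (mem_filter.mp hc).2,
      sum_eq_zero fun c hc => (hτ c).resolve_right (mem_filter.mp hc).2, sum_const,
      nsmul_eq_mul, add_zero]
  obtain ⟨c₀, hc₀⟩ := card_eq_one.mp (by
    have := hsum ▸ hS
    exact_mod_cast (mul_eq_right₀ hN).mp this.symm)
  refine ⟨c₀, fun c => ?_⟩
  have : τ c = N ↔ c = c₀ := by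
    have h1 := Finset.ext_iff.mp hc₀ c
    rwa [mem_filter, mem_singleton, and_iff_right (mem_univ c)] at h1
  split_ifs with h
  · exact this.mpr h
  · exact (hτ c).resolve_right (mt this.mp h)

section Walsh

variable {K : Type*} [Field K] [Fintype K]

lemma sum_mul_addChar_eq_add_sum (ψ : AddChar K ℤ) (L : K → K →+ K)
    (hL : ∀ x ≠ 0, Function.Bijective fun c => L c x) (F : K × K → ℤ) (h : K → ℤ)
    (hF0 : ∀ y, F (0, y) = 1) (hF : ∀ x ≠ 0, ∀ c, F (x, L c x) = h c) (hsum : ∑ c, h c = 0)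
    (u v : K) :
    ∑ p, F p * ψ (u * p.1 + v * p.2)
      = ∑ y, ψ (v * y) + ∑ c, h c * ∑ x, ψ (u * x + v * L c x) := by
  have hrow : ∀ x ≠ 0,
      ∑ y, F (x, y) * ψ (u * x + v * y) = ∑ c, h c * ψ (u * x + v * L c x) :=
    fun x hx => (Fintype.sum_bijective _ (hL x hx) _ _ fun c => by rw [hF x hx]).symm
  have hswap : ∑ c, h c * ∑ x, ψ (u * x + v * L c x)
      = ∑ x, ∑ c, h c * ψ (u * x + v * L c x) := by
    simp_rw [mul_sum]
    exact sum_comm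
  rw [Fintype.sum_prod_type, hswap, ← sub_eq_iff_eq_add, ← sum_sub_distrib, sum_eq_single (0 : K)]
  · simp [hF0, hsum]
  · intro x _ hx
    rw [hrow x hx, sub_self]
  · simp

theorem abs_sum_mul_addChar_eq_card (ψ : AddChar K ℤ) (hψ : ψ.IsPrimitive) (L : K → K →+ K)
    (hL : ∀ x ≠ 0, Function.Bijective fun c => L c x) (F : K × K → ℤ) (h : K → ℤ)
    (hF0 : ∀ y, F (0, y) = 1) (hF : ∀ x ≠ 0, ∀ c, F (x, L c x) = h c) (hsum : ∑ c, h c = 0)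
    (hsign : ∀ c, |h c| = 1) (u v : K) :
    |∑ p, F p * ψ (u * p.1 + v * p.2)| = Fintype.card K := by
  classical
  rw [sum_mul_addChar_eq_add_sum ψ L hL F h hF0 hF hsum]
  rcases eq_or_ne v 0 with rfl | hv
  · simp [← sum_mul, hsum]
  have hτ : ∀ c, ∑ x, ψ (u * x + v * L c x) = 0 ∨ ∑ x, ψ (u * x + v * L c x) = Fintype.card K := by
    intro c
    have := (ψ.compAddMonoidHom
      (AddMonoidHom.mulLeft u + (AddMonoidHom.mulLeft v).comp (L c))).sum_eq_ite
    split_ifs at this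
    exacts [.inr this, .inl this]
  have hline : ∑ y, ψ (v * y) = 0 := AddChar.sum_eq_zero_of_ne_one (hψ hv)
  have htotal : ∑ c, ∑ x, ψ (u * x + v * L c x) = Fintype.card K := by
    rw [sum_comm, sum_eq_single (0 : K)]
    · simp
    · intro x _ hx
      simp_rw [AddChar.map_add_eq_mul, ← mul_sum]
      rw [Fintype.sum_bijective _ (hL x hx) _ (fun y => ψ (v * y)) fun c => rfl, hline, mul_zero]
    · simp
  obtain ⟨c₀, hc₀⟩ := Finset.exists_eq_ite_of_sum_eq (by simp) hτ htotal
  simp_rw [hc₀, hline, mul_ite, mul_zero, sum_ite_eq', mem_univ, if_true, zero_add, abs_mul,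
    hsign, one_mul, Nat.abs_cast]

end Walsh

def signChar : AddChar (ZMod 2) ℤ where
  toFun a := (-1) ^ a.val
  map_zero_eq_one' := rfl
  map_add_eq_mul' := by decide

lemma abs_signChar (a : ZMod 2) : |signChar a| = 1 := by
  revert a
  decide

lemma sum_signChar_eq_zero {α : Type*} [Fintype α] (g : α → ZMod 2)
    (hg : 2 * Nat.card {x // g x = 1} = Fintype.card α) : ∑ x, signChar (g x) = 0 := by
  classical
  have hsign : ∀ a : ZMod 2, signChar a = 1 - 2 * if a = 1 then 1 else 0 := by decide
  simp_rw [hsign, sum_sub_distrib, ← mul_sum, sum_boole, sum_const, card_univ, nsmul_one]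
  rw [Nat.card_eq_fintype_card, Fintype.card_subtype] at hg
  rw [← hg]
  push_cast
  ring

section GaloisField

variable {m : ℕ}

lemma dicksonEval_eq (d : ℕ) (x : GaloisField 2 m) : dicksonEval d x = (dickson 1 1 d).eval x :=
  (dickson_one_one_eval_eq_sum d x).symm

lemma tr2_eq_trace (hm : m ≠ 0) (x : GaloisField 2 m) :
    tr2 x = Algebra.trace (ZMod 2) (GaloisField 2 m) x := by
  have htr : algebraMap (ZMod 2) _ (Algebra.trace (ZMod 2) (GaloisField 2 m) x) = trF x := by
    rw [FiniteField.algebraMap_trace_eq_sum_pow, GaloisField.finrank 2 hm, Nat.card_zmod]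
    rfl
  rw [tr2, ← htr]
  rcases (by decide : ∀ t : ZMod 2, t = 0 ∨ t = 1) (Algebra.trace (ZMod 2) _ x) with h | h <;>
    simp [h]

noncomputable def traceChar (m : ℕ) : AddChar (GaloisField 2 m) ℤ :=
  signChar.compAddMonoidHom (Algebra.trace (ZMod 2) (GaloisField 2 m)).toAddMonoidHom

lemma traceChar_apply (hm : m ≠ 0) (x : GaloisField 2 m) : traceChar m x = signChar (tr2 x) := by
  rw [tr2_eq_trace hm]
  rfl

lemma traceChar_isPrimitive : (traceChar m).IsPrimitive := by
  refine AddChar.IsPrimitive.of_ne_one fun h => ?_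
  obtain ⟨x, hx⟩ := Algebra.trace_surjective (ZMod 2) (GaloisField 2 m) 1
  have := DFunLike.congr_fun h x
  rw [traceChar, AddChar.compAddMonoidHom_apply, LinearMap.toAddMonoidHom_coe, hx] at this
  exact absurd this (by decide : signChar 1 ≠ 1)

end GaloisField

theorem stmt2_general (m k : ℕ) (hmpos : 0 < m)
    (d : ℕ) (hd : d * (2 ^ k - 1) ≡ 1 [MOD 2 ^ (2 * m) - 1])
    (g : GaloisField 2 m → ZMod 2)
    (hbal : Nat.card {x : GaloisField 2 m // g x = 1} = 2 ^ (m - 1))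
    (hg0 : g 0 = 0)
    (f : GaloisField 2 m × GaloisField 2 m → ZMod 2)
    (hf : ∀ x y, f (x, y) = g ((x * dicksonEval d (y ^ 2 * (x ^ (2 ^ k + 1))⁻¹))⁻¹)) :
    ∀ u v : GaloisField 2 m,
      |∑ p : GaloisField 2 m × GaloisField 2 m,
          ((-1 : ℤ) ^ (f p + tr2 (u * p.1 + v * p.2)).val)| = 2 ^ m := by
  intro u v
  have hm : m ≠ 0 := hmpos.ne'
  have hcard : Fintype.card (GaloisField 2 m) = 2 ^ m := by
    rw [Fintype.card_eq_nat_card, GaloisField.card 2 m hm]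
  have hd' : d * (2 ^ k - 1) ≡ 1 [MOD Fintype.card (GaloisField 2 m) ^ 2 - 1] := by
    rwa [hcard, ← pow_mul, mul_comm]
  have hbal' : ∑ c, signChar (g c⁻¹) = 0 := by
    refine (Equiv.sum_comp (Equiv.inv _) fun c => signChar (g c)).trans
      (sum_signChar_eq_zero g ?_)
    rw [hbal, hcard, ← pow_succ', Nat.sub_add_cancel hmpos]
  have key := abs_sum_mul_addChar_eq_card (traceChar m) traceChar_isPrimitive (spreadMap k)
    (fun x hx => bijective_spreadMap_apply hd' hx) (fun p => signChar (f p))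
    (fun c => signChar (g c⁻¹)) (by simp [hf, hg0])
    (fun x hx c => by rw [hf, dicksonEval_eq, mul_dickson_spreadMap hd' hx]) hbal'
    (fun c => abs_signChar _) u v
  rw [hcard, Nat.cast_pow, Nat.cast_ofNat] at key
  rw [← key]
  congr 2 with p
  rw [traceChar_apply hm, ← AddChar.map_add_eq_mul]
  rfl

theorem stmt2 (m k : ℕ) (hmpos : 0 < m) (hkpos : 0 < k) (hm : Odd m) (hk : Odd k)
    (hkm : k < m) (hgcd : Nat.gcd k m = 1)
    (d : ℕ) (hdpos : 0 < d) (hd : d * (2 ^ k - 1) ≡ 1 [MOD 2 ^ (2 * m) - 1])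
    (g : GaloisField 2 m → ZMod 2)
    (hbal : Nat.card {x : GaloisField 2 m // g x = 1} = 2 ^ (m - 1))
    (hg0 : g 0 = 0)
    (f : GaloisField 2 m × GaloisField 2 m → ZMod 2)
    (hf : ∀ x y, f (x, y) = g ((x * dicksonEval d (y ^ 2 * (x ^ (2 ^ k + 1))⁻¹))⁻¹)) :
    ∀ u v : GaloisField 2 m,
      |∑ p : GaloisField 2 m × GaloisField 2 m,
          ((-1 : ℤ) ^ (f p + tr2 (u * p.1 + v * p.2)).val)| = 2 ^ m :=
  stmt2_general m k hmpos d hd g hbal hg0 f hf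
end

section
/- Let m be an odd positive integer and a ∈ F_{2^m} with a ≠ 0 and tr(a^{-1}) = 0. Then the map L_a : F_{2^m} → F_{2^m}, L_a(z) = a·z + tr(z), is a bijection of F_{2^m}, and its inverse is the map z ↦ z·a^{-1} + a^{-1}·tr(z·a^{-1}). -/
lemma trF_add {m : ℕ} (x y : GaloisField 2 m) : trF (x + y) = trF x + trF y := by
  simp only [trF, ← Finset.sum_add_distrib]
  exact Finset.sum_congr rfl fun i _ => add_pow_char_pow ..

lemma pow_two_pow_eq {K : Type*} [CommRing K] {c : K} (hc : c ^ 2 = c) (i : ℕ) :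
    c ^ (2 ^ i) = c := by
  induction i with
  | zero => simpa using pow_one c
  | succ n ih => rw [pow_succ, pow_mul, ih, hc]

lemma trF_smul {m : ℕ} (c x : GaloisField 2 m) (hc : c ^ 2 = c) :
    trF (c * x) = c * trF x := by
  simp only [trF, Finset.mul_sum]
  exact Finset.sum_congr rfl fun i _ => by rw [mul_pow, pow_two_pow_eq hc]

lemma trF_sq {m : ℕ} (hm : 0 < m) (x : GaloisField 2 m) : trF x ^ 2 = trF x := by
  have hx : x ^ (2 ^ m) = x := by
    haveI : Fintype (GaloisField 2 m) := Fintype.ofFinite _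
    have h := FiniteField.pow_card x
    rwa [← Nat.card_eq_fintype_card, GaloisField.card 2 m hm.ne'] at h
  have h1 : trF x ^ 2 = ∑ i ∈ Finset.range m, x ^ (2 ^ (i + 1)) := by
    rw [trF, sum_pow_char]
    exact Finset.sum_congr rfl fun i _ => by rw [← pow_mul, ← pow_succ]
  have h2 : ∑ i ∈ Finset.range (m + 1), x ^ (2 ^ i)
      = (∑ i ∈ Finset.range m, x ^ (2 ^ (i + 1))) + x ^ (2 ^ 0) :=
    Finset.sum_range_succ' _ m
  have h3 : ∑ i ∈ Finset.range (m + 1), x ^ (2 ^ i) = trF x + x := by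
    rw [Finset.sum_range_succ, hx, trF]
  rw [h1]
  have h4 : (∑ i ∈ Finset.range m, x ^ (2 ^ (i + 1))) + x = trF x + x := by
    rw [← h3, h2, pow_zero, pow_one]
  exact add_right_cancel h4

theorem stmt3 (m : ℕ) (hmpos : 0 < m) (hm : Odd m)
    (a : GaloisField 2 m) (ha : a ≠ 0) (htra : trF a⁻¹ = 0)
    (L : GaloisField 2 m → GaloisField 2 m) (hL : ∀ z, L z = a * z + trF z) :
    Function.Bijective L ∧
      (∀ z, L (z * a⁻¹ + a⁻¹ * trF (z * a⁻¹)) = z) ∧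
      (∀ z, (L z) * a⁻¹ + a⁻¹ * trF ((L z) * a⁻¹) = z) := by
  have hai : a * a⁻¹ = 1 := mul_inv_cancel₀ ha
  have htwo : (2 : GaloisField 2 m) = 0 := by
    exact_mod_cast CharP.cast_eq_zero (GaloisField 2 m) 2
  have key1 : ∀ z, L (z * a⁻¹ + a⁻¹ * trF (z * a⁻¹)) = z := by
    intro z
    set t := trF (z * a⁻¹) with ht
    have ht2 : t ^ 2 = t := trF_sq hmpos _
    have h1 : trF (a⁻¹ * t) = 0 := by
      rw [mul_comm, trF_smul t a⁻¹ ht2, htra, mul_zero]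
    rw [hL, trF_add, h1, ← ht]
    linear_combination (z + t) * hai + t * htwo
  have key2 : ∀ z, (L z) * a⁻¹ + a⁻¹ * trF ((L z) * a⁻¹) = z := by
    intro z
    rw [hL]
    set s := trF z with hs
    have hs2 : s ^ 2 = s := trF_sq hmpos _
    have heq : (a * z + s) * a⁻¹ = z + s * a⁻¹ := by
      field_simp
    have h1 : trF ((a * z + s) * a⁻¹) = s := by
      rw [heq, trF_add, ← hs, trF_smul s a⁻¹ hs2, htra, mul_zero, add_zero]
    rw [h1]
    linear_combination z * hai + (s * a⁻¹) * htwo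
  refine ⟨⟨fun x y hxy => ?_, fun z => ⟨_, key1 z⟩⟩, key1, key2⟩
  rw [← key2 x, ← key2 y, hxy]
end
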